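/- arXiv:1412.1933 — 4 statements merged into one kernel-verified Lean document; each statement's English description precedes it below -/
import Mathlib

section
/- (Bregman–Minc inequality) Let A be an n×n matrix with all entries equal to 0 or 1, and let r_i be the number of 1's in the i-th row of A. Assume r_i ≥ 1 for all i. Then per A ≤ ∏_{i=1}^n (r_i!)^{1/r_i}. -/
/-!
Schrijver's proof, for the bijections `f : α ≃ β` supported by a relation `M` (the support of a
(0,1)-matrix). Let `P` be the set of these bijections, `d j` the degree of row `j` and `q i k` the
number of `f ∈ P` with `f i = k`; this is the same count for the minor with row `i` and column `k`
deleted. Convexity of `x ↦ x log x` gives `|P| ^ |P| ≤ d i ^ |P| * ∏_{f ∈ P} q i (f i)` for every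
row `i`. Bound each `q i (f i)` by induction on the minor and regroup the product over `i`: for
fixed `f` and `j`, row `j` of the minor at `(i, f i)` has degree `d j - 1` for exactly `d j - 1`
indices `i ≠ j` and degree `d j` for the other `n - d j`. The bounds then collapse to
`|P| ^ (n |P|) ≤ (∏ j, (d j)! ^ (1 / d j)) ^ (n |P|)`.
-/

open Finset Equiv Nat

theorem pow_sum_le_card_pow_mul_prod_pow {ι : Type*} (s : Finset ι) (c : ι → ℕ) :
    ((∑ k ∈ s, c k : ℕ) : ℝ) ^ (∑ k ∈ s, c k) ≤
      (#s : ℝ) ^ (∑ k ∈ s, c k) * ∏ k ∈ s, (c k : ℝ) ^ c k := by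
  have hpos (k : ι) : 0 < (c k : ℝ) ^ c k := by
    rcases (c k).eq_zero_or_pos with h | h
    · simp [h]
    · exact pow_pos (by exact_mod_cast h) _
  set T := ∑ k ∈ s, c k with hTdef
  rcases Nat.eq_zero_or_pos T with hT | hT
  · have hc : ∀ k ∈ s, c k = 0 := sum_eq_zero_iff.mp hT
    rw [prod_eq_one fun k hk => by rw [hc k hk, pow_zero], hT]
    simp
  have hs : (0 : ℝ) < #s := by exact_mod_cast (nonempty_of_sum_ne_zero hT.ne').card_pos
  have jensen := Real.convexOn_mul_log.map_sum_le (t := s) (w := fun _ => (#s : ℝ)⁻¹)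
    (p := fun k => (c k : ℝ)) (fun _ _ => by positivity) (by simp [hs.ne'])
    (fun k _ => Set.mem_Ici.mpr (Nat.cast_nonneg _))
  simp only [smul_eq_mul, ← mul_sum, ← Nat.cast_sum, ← hTdef, mul_assoc] at jensen
  have hlog : Real.log (((T : ℝ) / #s) ^ T) ≤ Real.log (∏ k ∈ s, (c k : ℝ) ^ c k) := by
    rw [Real.log_pow, Real.log_prod fun k _ => (hpos k).ne', div_eq_inv_mul]
    simpa only [Real.log_pow] using le_of_mul_le_mul_left jensen (inv_pos.2 hs)
  rw [Real.log_le_log_iff (by positivity) (prod_pos fun k _ => hpos k), div_pow,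
    div_le_iff₀ (by positivity)] at hlog
  linarith

-- For `m = 0` this is `1`, because `1 / 0 = 0`: rows with no admissible column cost nothing.
noncomputable def factorialRoot (m : ℕ) : ℝ := (m ! : ℝ) ^ ((1 : ℝ) / m)

lemma factorialRoot_pos (m : ℕ) : 0 < factorialRoot m := by
  unfold factorialRoot; positivity

lemma factorialRoot_pow_self (m : ℕ) : factorialRoot m ^ m = m ! := by
  rcases m.eq_zero_or_pos with rfl | hm
  · simp
  · rw [factorialRoot, ← Real.rpow_natCast, ← Real.rpow_mul (by positivity),
      one_div_mul_cancel (by positivity), Real.rpow_one]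

lemma mul_factorial_pred_mul_factorialRoot_pow {d n : ℕ} (hd : d ≠ 0) (hdn : d ≤ n) :
    d * ((d - 1)! : ℝ) * factorialRoot d ^ (n - d) = factorialRoot d ^ n := by
  rw [← Nat.cast_mul, Nat.mul_factorial_pred hd, ← factorialRoot_pow_self, ← pow_add,
    Nat.add_sub_cancel' hdn]

section RowDegree

variable {α β : Type*} [Fintype β] [DecidableEq β] {M : α → β → Prop} [DecidableRel M]

variable (M) in
def rowDegree (a : α) : ℕ := #{b | M a b}

variable (M) in
def minor (i : α) (k : β) (a : {a // a ≠ i}) (b : {b // b ≠ k}) : Prop := M a b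

instance (i : α) (k : β) : DecidableRel (minor M i k) := fun a b => ‹DecidableRel M› a b

lemma rowDegree_minor (i : α) (k : β) (a : {a // a ≠ i}) :
    rowDegree (minor M i k) a = if M a k then rowDegree M a - 1 else rowDegree M a := by
  calc rowDegree (minor M i k) a = Fintype.card {b : {b // b ≠ k} // M a b} :=
        (Fintype.card_subtype _).symm
    _ = #(({b | M a b} : Finset β).erase k) := by
        rw [Fintype.card_congr (subtypeSubtypeEquivSubtypeInter _ _), Fintype.card_subtype,
          ← filter_ne', filter_filter]
        simp only [and_comm]
    _ = _ := by simp [card_erase_eq_ite, rowDegree]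

lemma prod_erase_factorialRoot_ite {j : α} {k : β} (hk : M j k) :
    ∏ k' ∈ univ.erase k, factorialRoot (if M j k' then rowDegree M j - 1 else rowDegree M j) =
      (rowDegree M j - 1)! * factorialRoot (rowDegree M j) ^ (Fintype.card β - rowDegree M j) := by
  have hcompl : #{b | ¬ M j b} = Fintype.card β - rowDegree M j := by
    rw [rowDegree, ← Finset.card_univ,
      ← card_filter_add_card_filter_not (s := univ) fun b => M j b]
    omega
  rw [← prod_congr rfl fun _ _ => (apply_ite factorialRoot ..).symm, prod_ite, filter_erase,
    filter_erase, prod_const, prod_const, card_erase_of_mem (by simpa using hk),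
    erase_eq_of_notMem (by simpa using hk), hcompl]
  exact congrArg (· * _) (factorialRoot_pow_self _)

end RowDegree

namespace Equiv

variable {α β : Type*} [DecidableEq α] [DecidableEq β]

def subtypeApplyEqEquiv (i : α) (k : β) :
    {f : α ≃ β // f i = k} ≃ ({a // a ≠ i} ≃ {b // b ≠ k}) where
  toFun f := f.1.subtypeEquiv fun a => by rw [← f.1.injective.ne_iff (y := i), f.2]
  invFun τ := ⟨(optionSubtypeNe i).symm.trans (τ.optionCongr.trans (optionSubtypeNe k)), by simp⟩
  left_inv f := by
    ext a
    by_cases h : a = i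
    · subst h; simp [f.2]
    · simp [optionSubtypeNe_symm_of_ne h]
  right_inv τ := by
    ext a
    simp [optionSubtypeNe_symm_of_ne a.2]

end Equiv

section SupportedEquivs

variable {α β : Type*} [Fintype α] [Fintype β] [DecidableEq α] [DecidableEq β]
  {M : α → β → Prop} [DecidableRel M]

variable (M) in
def supportedEquivs : Finset (α ≃ β) := {f | ∀ a, M a (f a)}

lemma card_filter_apply_eq_eq_card_supportedEquivs_minor {i : α} {k : β} (hik : M i k) :
    #{f ∈ supportedEquivs M | f i = k} = #(supportedEquivs (minor M i k)) := by
  simp only [supportedEquivs, filter_filter, ← Fintype.card_subtype]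
  refine Fintype.card_congr <| (subtypeEquivRight fun f => and_comm).trans <|
    (subtypeSubtypeEquivSubtypeInter (fun f : α ≃ β => f i = k) _).symm.trans <|
    subtypeEquiv (subtypeApplyEqEquiv i k) fun f => ⟨fun hf a => hf a, fun hf a => ?_⟩
  by_cases h : a = i
  · subst h; simpa [f.2] using hik
  · exact hf ⟨a, h⟩

lemma card_supportedEquivs_pow_self_le (i : α) :
    (#(supportedEquivs M) : ℝ) ^ #(supportedEquivs M) ≤
      (rowDegree M i : ℝ) ^ #(supportedEquivs M) *
        ∏ f ∈ supportedEquivs M, (#{g ∈ supportedEquivs M | g i = f i} : ℝ) := by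
  set P := supportedEquivs M
  have hmaps : ∀ f ∈ P, f i ∈ ({b | M i b} : Finset β) := fun f hf => by
    simp_all [P, supportedEquivs]
  have hsum : ∑ k ∈ {b | M i b}, #{f ∈ P | f i = k} = #P :=
    (card_eq_sum_card_fiberwise hmaps).symm
  have hprod : ∏ f ∈ P, (#{g ∈ P | g i = f i} : ℝ) =
      ∏ k ∈ {b | M i b}, (#{f ∈ P | f i = k} : ℝ) ^ #{f ∈ P | f i = k} := by
    rw [← prod_fiberwise_of_maps_to hmaps]
    refine prod_congr rfl fun k _ => ?_
    rw [prod_congr rfl fun f hf => by rw [(mem_filter.mp hf).2], prod_const]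
  have := pow_sum_le_card_pow_mul_prod_pow ({b | M i b} : Finset β) fun k => #{f ∈ P | f i = k}
  rwa [hsum, ← hprod] at this

lemma prod_card_filter_apply_eq_le
    (hq : ∀ i k, M i k → (#{f ∈ supportedEquivs M | f i = k} : ℝ) ≤
      ∏ j ∈ univ.erase i, factorialRoot (if M j k then rowDegree M j - 1 else rowDegree M j))
    {f : α ≃ β} (hf : f ∈ supportedEquivs M) :
    ∏ i, (#{g ∈ supportedEquivs M | g i = f i} : ℝ) ≤ ∏ j,
      (rowDegree M j - 1)! * factorialRoot (rowDegree M j) ^ (Fintype.card β - rowDegree M j) := by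
  have hfM : ∀ a, M a (f a) := by simpa [supportedEquivs] using hf
  calc ∏ i, (#{g ∈ supportedEquivs M | g i = f i} : ℝ)
      ≤ ∏ i, ∏ j ∈ univ.erase i,
          factorialRoot (if M j (f i) then rowDegree M j - 1 else rowDegree M j) :=
        prod_le_prod (fun _ _ => by positivity) fun i _ => hq i (f i) (hfM i)
    _ = ∏ j, ∏ i ∈ univ.erase j,
          factorialRoot (if M j (f i) then rowDegree M j - 1 else rowDegree M j) :=
        prod_comm' fun i j => by simp [ne_comm]
    _ = ∏ j, ∏ k ∈ univ.erase (f j),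
          factorialRoot (if M j k then rowDegree M j - 1 else rowDegree M j) :=
        prod_congr rfl fun j _ => prod_equiv f (by simp) (by simp)
    _ = _ := prod_congr rfl fun j _ => prod_erase_factorialRoot_ite (hfM j)

lemma card_supportedEquivs_le_of_minors [Nonempty α]
    (hq : ∀ i k, M i k → (#{f ∈ supportedEquivs M | f i = k} : ℝ) ≤
      ∏ j ∈ univ.erase i, factorialRoot (if M j k then rowDegree M j - 1 else rowDegree M j)) :
    (#(supportedEquivs M) : ℝ) ≤ ∏ a, factorialRoot (rowDegree M a) := by
  set P := supportedEquivs M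
  rcases P.eq_empty_or_nonempty with hP | ⟨f₀, hf₀⟩
  · rw [hP, card_empty, Nat.cast_zero]
    exact prod_nonneg fun a _ => (factorialRoot_pos _).le
  have hf₀M : ∀ a, M a (f₀ a) := by simpa [P, supportedEquivs] using hf₀
  have hcard : Fintype.card α = Fintype.card β := Fintype.card_congr f₀
  have hpos : ∀ j, rowDegree M j ≠ 0 := fun j =>
    (card_pos.mpr ⟨f₀ j, by simpa using hf₀M j⟩).ne'
  have hle : ∀ j, rowDegree M j ≤ Fintype.card β := fun j => card_le_univ _
  have key : (#P : ℝ) ^ (Fintype.card β * #P) ≤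
      (∏ a, factorialRoot (rowDegree M a)) ^ (Fintype.card β * #P) := calc
    (#P : ℝ) ^ (Fintype.card β * #P) = ∏ _i : α, (#P : ℝ) ^ #P := by
      rw [prod_const, Finset.card_univ, hcard, pow_mul']
    _ ≤ ∏ i, ((rowDegree M i : ℝ) ^ #P * ∏ f ∈ P, (#{g ∈ P | g i = f i} : ℝ)) :=
      prod_le_prod (fun _ _ => by positivity) fun i _ => card_supportedEquivs_pow_self_le i
    _ = ∏ f ∈ P, ((∏ i, (rowDegree M i : ℝ)) * ∏ i, (#{g ∈ P | g i = f i} : ℝ)) := by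
      rw [prod_mul_distrib, prod_comm, prod_mul_distrib, prod_const, prod_pow]
    _ ≤ ∏ f ∈ P, ((∏ i, (rowDegree M i : ℝ)) * ∏ j, (rowDegree M j - 1)! *
          factorialRoot (rowDegree M j) ^ (Fintype.card β - rowDegree M j)) :=
      prod_le_prod (fun _ _ => mul_nonneg (prod_nonneg fun _ _ => by positivity)
          (prod_nonneg fun _ _ => by positivity)) fun f hf =>
        mul_le_mul_of_nonneg_left (prod_card_filter_apply_eq_le hq hf)
          (prod_nonneg fun _ _ => by positivity)
    _ = ∏ _f ∈ P, ∏ j, factorialRoot (rowDegree M j) ^ Fintype.card β := by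
      refine prod_congr rfl fun _ _ => ?_
      rw [← prod_mul_distrib]
      exact prod_congr rfl fun j _ => by
        rw [← mul_assoc, mul_factorial_pred_mul_factorialRoot_pow (hpos j) (hle j)]
    _ = _ := by rw [prod_const, prod_pow, pow_mul]
  have hexp : Fintype.card β * #P ≠ 0 :=
    mul_ne_zero (hcard ▸ Fintype.card_ne_zero) (card_ne_zero.mpr ⟨f₀, hf₀⟩)
  exact le_of_pow_le_pow_left₀ hexp (prod_nonneg fun a _ => (factorialRoot_pos _).le) key

end SupportedEquivs

theorem card_supportedEquivs_le {α β : Type*} [Fintype α] [Fintype β] [DecidableEq α]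
    [DecidableEq β] (M : α → β → Prop) [DecidableRel M] :
    (#(supportedEquivs M) : ℝ) ≤ ∏ a, factorialRoot (rowDegree M a) := by
  induction h : Fintype.card α generalizing α β with
  | zero =>
    have : IsEmpty α := Fintype.card_eq_zero_iff.mp h
    simpa using card_le_one_of_subsingleton (supportedEquivs M)
  | succ n ih =>
    have : Nonempty α := Fintype.card_pos_iff.mp (by omega)
    refine card_supportedEquivs_le_of_minors fun i k hik => ?_
    have hminor := ih (minor M i k) (by simp [Fintype.card_subtype_compl, h])
    rw [card_filter_apply_eq_eq_card_supportedEquivs_minor hik]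
    refine hminor.trans_eq ?_
    simp only [rowDegree_minor]
    exact (prod_subtype (p := (· ≠ i)) (univ.erase i) (by simp) fun j =>
      factorialRoot (if M j k then rowDegree M j - 1 else rowDegree M j)).symm

lemma Matrix.permanent_eq_card_supportedEquivs {n R : Type*} [Fintype n] [DecidableEq n]
    [CommSemiring R] {M : n → n → Prop} [DecidableRel M] {A : Matrix n n R}
    (hA : ∀ i j, A i j = if M i j then 1 else 0) :
    A.permanent = #(supportedEquivs M) := by
  rw [← Matrix.permanent_transpose, Matrix.permanent, supportedEquivs, ← sum_boole]
  refine sum_congr rfl fun σ _ => ?_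
  simp only [Matrix.transpose_apply, hA, prod_boole, mem_univ, true_implies]

theorem bregman_minc_general {n : ℕ} (A : Matrix (Fin n) (Fin n) ℝ) (r : Fin n → ℕ)
    (h01 : ∀ i j, A i j = 0 ∨ A i j = 1)
    (hr : ∀ i, r i = (Finset.univ.filter fun j => A i j = 1).card) :
    A.permanent ≤ ∏ i, ((r i).factorial : ℝ) ^ ((1 : ℝ) / (r i)) := by
  classical
  have hA : ∀ i j, A i j = if A i j = 1 then 1 else 0 := fun i j => by
    rcases h01 i j with h | h <;> simp [h]
  rw [Matrix.permanent_eq_card_supportedEquivs hA]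
  refine (card_supportedEquivs_le _).trans_eq (prod_congr rfl fun i _ => ?_)
  rw [hr i]
  rfl

/-- Bregman–Minc inequality: if `A` is an `n × n` (0,1)-matrix and `r i ≥ 1`
is the number of 1's in the `i`-th row, then `per A ≤ ∏ i, (r i)! ^ (1 / r i)`. -/
theorem bregman_minc {n : ℕ} (A : Matrix (Fin n) (Fin n) ℝ) (r : Fin n → ℕ)
    (h01 : ∀ i j, A i j = 0 ∨ A i j = 1)
    (hr : ∀ i, r i = (Finset.univ.filter fun j => A i j = 1).card)
    (hr1 : ∀ i, 1 ≤ r i) :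
    A.permanent ≤ ∏ i, ((r i).factorial : ℝ) ^ ((1 : ℝ) / (r i)) :=
  bregman_minc_general A r h01 hr
end

section
/- Let A be an n×n matrix with real entries in the interval [0,1], and suppose that the sum of all entries of A equals γ·n for some real γ ≥ 0 with ⌈γ⌉ + 1 ≤ n. Then per A ≤ (γ+1)^n · e^{-n} · (e·√(γ+1))^{n/(γ+1)}. -/
/-!
Round `A` to a random `0`-`1` matrix `M` with independent entries `M i j ~ Bernoulli (A i j)`;
since the permanent is multilinear, `per A = 𝔼 per M`. Bregman's theorem bounds `per M` by
`∏ i, (r i)! ^ (1 / r i)`, `r i` being the row sums of `M`; we follow Schrijver's proof: Jensen's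
inequality for `x log x` along each Laplace expansion, then double counting over permutations.
Stirling turns `(r !) ^ (1 / r)` into `exp (g (r + 1))` with
`g s = log s - 1 + (1 + log s / 2) / s` (`stirlingBound`).
The rows of `M` are independent and `exp ∘ g` is concave on `[1, ∞)`, so
`𝔼 ∏ i, exp (g (r i + 1)) ≤ ∏ i, exp (g (ρ i + 1))` with `ρ i` the row sums of `A`; concavity of
`g` then replaces every `ρ i` by their mean `γ`, and `exp (n g (γ + 1))` is the stated bound.
-/

open Finset Real Equiv
open scoped Nat

namespace Matrix

variable {R : Type*} [CommSemiring R] {n : ℕ}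

theorem permanent_succ_column_zero (A : Matrix (Fin (n + 1)) (Fin (n + 1)) R) :
    A.permanent = ∑ i, A i 0 * (A.submatrix i.succAbove Fin.succ).permanent := by
  rw [permanent, univ_perm_fin_succ, ← univ_product_univ]
  simp only [sum_map, Equiv.toEmbedding_apply, sum_product]
  refine sum_congr rfl fun i _ => Fin.cases ?_ (fun i => ?_) i
  · simp only [Fin.prod_univ_succ, permanent, mul_sum,
      Perm.decomposeFin_symm_apply_zero, Perm.decomposeFin_symm_apply_succ, Equiv.swap_self,
      Equiv.coe_refl, id, Fin.succAbove_zero, submatrix_apply]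
  -- `univ_perm_fin_succ` embeds `Perm (Fin n)` through `i.cycleRange`, hence the column permutation
  rw [← permanent_permute_cols i.cycleRange, permanent, mul_sum]
  refine sum_congr rfl fun σ _ => ?_
  simp only [Fin.prod_univ_succ, Perm.decomposeFin_symm_apply_zero,
    Perm.decomposeFin_symm_apply_succ, ← Fin.succAbove_cycleRange, submatrix_apply, id]

theorem permanent_succ_row_zero (A : Matrix (Fin (n + 1)) (Fin (n + 1)) R) :
    A.permanent = ∑ j, A 0 j * (A.submatrix Fin.succ j.succAbove).permanent := by
  rw [← permanent_transpose A, permanent_succ_column_zero]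
  refine sum_congr rfl fun j _ => ?_
  rw [← permanent_transpose]
  simp only [transpose_apply, transpose_submatrix, transpose_transpose]

theorem permanent_succ_row (A : Matrix (Fin (n + 1)) (Fin (n + 1)) R) (i : Fin (n + 1)) :
    A.permanent = ∑ j, A i j * (A.submatrix i.succAbove j.succAbove).permanent := by
  rw [← permanent_permute_cols i.cycleRange⁻¹ A, permanent_succ_row_zero]
  refine sum_congr rfl fun j _ => ?_
  rw [submatrix_apply, submatrix_submatrix]
  congr 2
  · rw [Perm.inv_def, Fin.cycleRange_symm_zero]
  · ext i' j'
    simp only [submatrix_apply, Function.comp_apply, id_eq, Perm.inv_def,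
      Fin.cycleRange_symm_succ]

theorem sum_mul_mul_permanent_submatrix (A : Matrix (Fin (n + 1)) (Fin (n + 1)) R)
    (i : Fin (n + 1)) (g : Fin (n + 1) → R) :
    ∑ j, A i j * g j * (A.submatrix i.succAbove j.succAbove).permanent =
      ∑ σ : Perm (Fin (n + 1)), g (σ⁻¹ i) * ∏ m, A (σ m) m := by
  let A' : Matrix (Fin (n + 1)) (Fin (n + 1)) R := of fun k j => A k j * if k = i then g j else 1
  have hminor (j : Fin (n + 1)) : A'.submatrix i.succAbove j.succAbove =
      A.submatrix i.succAbove j.succAbove := by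
    ext k j'
    simp [A', Fin.succAbove_ne]
  calc _ = A'.permanent := by
        rw [permanent_succ_row A' i]
        simp only [hminor]
        simp [A']
    _ = _ := by
      refine sum_congr rfl fun σ _ => ?_
      simp only [A', of_apply, prod_mul_distrib, ← Perm.eq_inv_iff_eq, prod_ite_eq', mem_univ,
        if_true, mul_comm]

theorem permanent_nonneg {ι : Type*} [Fintype ι] [DecidableEq ι] {A : Matrix ι ι ℝ}
    (h : ∀ i j, 0 ≤ A i j) : 0 ≤ A.permanent :=
  sum_nonneg fun _ _ => prod_nonneg fun _ _ => h _ _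

end Matrix

open Matrix

lemma sum_mul_log_sum_le {ι : Type*} [Fintype ι] {w q : ι → ℝ} (hw : ∀ j, 0 ≤ w j)
    (hq : ∀ j, 0 ≤ q j) (hr : 0 < ∑ j, w j) :
    (∑ j, w j * q j) * log (∑ j, w j * q j) ≤
      (∑ j, w j * q j) * log (∑ j, w j) + ∑ j, w j * (q j * log (q j)) := by
  set r := ∑ j, w j
  set p := ∑ j, w j * q j
  have hJ := convexOn_mul_log.map_sum_le (t := univ) (w := fun j => w j / r) (p := q)
    (fun j _ => div_nonneg (hw j) hr.le) (by rw [← sum_div, div_self hr.ne']) (fun j _ => hq j)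
  simp only [smul_eq_mul, div_mul_eq_mul_div, ← sum_div] at hJ
  rw [div_le_div_iff_of_pos_right hr] at hJ
  have hlog : p * log (p / r) = p * log p - p * log r := by
    rcases eq_or_ne p 0 with hp | hp
    · simp [hp]
    · rw [log_div hp hr.ne', mul_sub]
  linarith

/-- `log (r !) / r`, taken through `Γ` so that it applies directly to the real row sums of a
`0`-`1` matrix. -/
noncomputable def bregmanExponent (r : ℝ) : ℝ := log (Gamma (r + 1)) / r

lemma mul_bregmanExponent (r : ℝ) : r * bregmanExponent r = log (Gamma (r + 1)) := by
  rcases eq_or_ne r 0 with rfl | hr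
  · simp
  · exact mul_div_cancel₀ _ hr

lemma log_add_mul_bregmanExponent_sub_one {r : ℝ} (hr : 0 < r) :
    log r + (r - 1) * bregmanExponent (r - 1) = r * bregmanExponent r := by
  rw [mul_bregmanExponent, mul_bregmanExponent, sub_add_cancel, Gamma_add_one hr.ne',
    log_mul hr.ne' (Gamma_pos_of_pos hr).ne']

lemma sum_apply_sum_sub_of_zero_one {ι : Type*} [Fintype ι] (f : ℝ → ℝ) {b : ι → ℝ}
    (hb : ∀ j, b j = 0 ∨ b j = 1) :
    ∑ j, f (∑ k, b k - b j) =
      (∑ k, b k) * f (∑ k, b k - 1) + (Fintype.card ι - ∑ k, b k) * f (∑ k, b k) := by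
  have h (j : ι) : f (∑ k, b k - b j) = b j * f (∑ k, b k - 1) + (1 - b j) * f (∑ k, b k) := by
    rcases hb j with h | h <;> simp [h]
  simp only [h, sum_add_distrib, ← sum_mul, sum_sub_distrib, sum_const, card_univ, nsmul_eq_mul,
    mul_one]

section ZeroOne

variable {n : ℕ} {B : Matrix (Fin (n + 1)) (Fin (n + 1)) ℝ}

/- For `σ` supported on `B`, as `i` runs over the rows other than `k`, the column `σ⁻¹ i` meets
every one of row `k` except the one in column `σ⁻¹ k`. -/
lemma sum_sum_succAbove_of_forall_apply_perm_eq_one (hB : ∀ i j, B i j = 0 ∨ B i j = 1)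
    (f : ℝ → ℝ) {σ : Perm (Fin (n + 1))} (hσ : ∀ m, B (σ m) m = 1) :
    ∑ i, ∑ k, f (∑ j, B (i.succAbove k) j - B (i.succAbove k) (σ⁻¹ i)) =
      ∑ k, ((∑ j, B k j - 1) * f (∑ j, B k j - 1) + (n + 1 - ∑ j, B k j) * f (∑ j, B k j)) := by
  have hdiag (i : Fin (n + 1)) : B i (σ⁻¹ i) = 1 := by
    simpa using hσ (σ⁻¹ i)
  have hrow (k : Fin (n + 1)) : ∑ i, f (∑ j, B k j - B k (σ⁻¹ i)) =
      (∑ j, B k j) * f (∑ j, B k j - 1) + (n + 1 - ∑ j, B k j) * f (∑ j, B k j) := by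
    rw [Equiv.sum_comp σ⁻¹ fun j => f (∑ j', B k j' - B k j),
      sum_apply_sum_sub_of_zero_one f (hB k)]
    simp
  have hsplit (i : Fin (n + 1)) :=
    Fin.sum_univ_succAbove (fun k => f (∑ j, B k j - B k (σ⁻¹ i))) i
  simp only [hdiag] at hsplit
  calc _ = ∑ i, (∑ k, f (∑ j, B k j - B k (σ⁻¹ i)) - f (∑ j, B i j - 1)) := by
        simp only [hsplit, add_sub_cancel_left]
    _ = _ := by
      rw [sum_sub_distrib, sum_comm, ← sum_sub_distrib]
      simp only [hrow]
      congr! 1 with k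
      ring

lemma sum_sum_mul_mul_permanent_submatrix_eq (hB : ∀ i j, B i j = 0 ∨ B i j = 1) (f : ℝ → ℝ) :
    ∑ i, ∑ j, B i j * (∑ k, f (∑ j', B.submatrix i.succAbove j.succAbove k j')) *
      (B.submatrix i.succAbove j.succAbove).permanent =
    B.permanent *
      ∑ k, ((∑ j, B k j - 1) * f (∑ j, B k j - 1) + (n + 1 - ∑ j, B k j) * f (∑ j, B k j)) := by
  have hminor (i j : Fin (n + 1)) (k : Fin n) :
      ∑ j', B.submatrix i.succAbove j.succAbove k j' =
        ∑ j', B (i.succAbove k) j' - B (i.succAbove k) j := by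
    rw [Fin.sum_univ_succAbove (B (i.succAbove k)) j]
    simp
  simp only [hminor, sum_mul_mul_permanent_submatrix]
  rw [sum_comm, permanent, sum_mul]
  refine sum_congr rfl fun σ _ => ?_
  rw [← sum_mul]
  by_cases hσ : ∀ m, B (σ m) m = 1
  · rw [sum_sum_succAbove_of_forall_apply_perm_eq_one hB f hσ, mul_comm]
  · obtain ⟨m, hm⟩ := not_forall.mp hσ
    have hzero : ∏ m, B (σ m) m = 0 := prod_eq_zero (mem_univ m) ((hB _ _).resolve_right hm)
    simp [hzero]

lemma one_le_sum_of_permanent_ne_zero (hB : ∀ i j, B i j = 0 ∨ B i j = 1) (hp : B.permanent ≠ 0)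
    (k : Fin (n + 1)) : 1 ≤ ∑ j, B k j := by
  obtain ⟨j, -, hj⟩ := exists_ne_zero_of_sum_ne_zero ((permanent_succ_row B k).symm.trans_ne hp)
  have hkj : B k j = 1 := (hB k j).resolve_left (left_ne_zero_of_mul hj)
  exact hkj ▸ single_le_sum (fun j _ => by rcases hB k j with h | h <;> simp [h]) (mem_univ j)

end ZeroOne

theorem permanent_le_exp_sum_bregmanExponent : ∀ {n : ℕ} (B : Matrix (Fin n) (Fin n) ℝ),
    (∀ i j, B i j = 0 ∨ B i j = 1) → B.permanent ≤ exp (∑ i, bregmanExponent (∑ j, B i j))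
  | 0, B, _ => by simp [permanent_isEmpty]
  | n + 1, B, hB => by
    have hB0 (i j : Fin (n + 1)) : 0 ≤ B i j := by rcases hB i j with h | h <;> simp [h]
    set p : ℝ := B.permanent
    rcases (permanent_nonneg hB0 : 0 ≤ p).eq_or_lt with hp | hp
    · exact hp.symm.le.trans (exp_pos _).le
    set r : Fin (n + 1) → ℝ := fun k => ∑ j, B k j
    set q : Fin (n + 1) → Fin (n + 1) → ℝ := fun i j =>
      (B.submatrix i.succAbove j.succAbove).permanent
    have hexp (i : Fin (n + 1)) : p = ∑ j, B i j * q i j := permanent_succ_row B i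
    have hq0 (i j : Fin (n + 1)) : 0 ≤ q i j := permanent_nonneg fun _ _ => hB0 _ _
    have hr (k : Fin (n + 1)) : 1 ≤ r k := one_le_sum_of_permanent_ne_zero hB hp.ne' k
    have hjensen (i : Fin (n + 1)) :
        p * log p ≤ p * log (r i) + ∑ j, B i j * (q i j * log (q i j)) := by
      have h := sum_mul_log_sum_le (hB0 i) (hq0 i) (by linarith [hr i])
      rwa [← hexp i] at h
    have hminor (i j : Fin (n + 1)) : q i j * log (q i j) ≤
        q i j * ∑ k, bregmanExponent (∑ j', B.submatrix i.succAbove j.succAbove k j') := by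
      rcases (hq0 i j).eq_or_lt with h | h
      · simp [← h]
      · exact mul_le_mul_of_nonneg_left ((log_le_iff_le_exp h).2
          (permanent_le_exp_sum_bregmanExponent (B.submatrix i.succAbove j.succAbove)
            fun _ _ => hB _ _)) h.le
    have key : (n + 1) * (p * log p) ≤ (n + 1) * (p * ∑ k, bregmanExponent (r k)) := calc
      (n + 1) * (p * log p) = ∑ i : Fin (n + 1), p * log p := by simp
      _ ≤ ∑ i, (p * log (r i) + ∑ j, B i j * (q i j *
            ∑ k, bregmanExponent (∑ j', B.submatrix i.succAbove j.succAbove k j'))) :=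
        sum_le_sum fun i _ => (hjensen i).trans (add_le_add le_rfl (sum_le_sum fun j _ =>
          mul_le_mul_of_nonneg_left (hminor i j) (hB0 i j)))
      _ = p * ∑ k, log (r k) + p * ∑ k, ((r k - 1) * bregmanExponent (r k - 1) +
            (n + 1 - r k) * bregmanExponent (r k)) := by
        rw [sum_add_distrib, ← mul_sum, ← sum_sum_mul_mul_permanent_submatrix_eq hB]
        congr! 3
        ring
      _ = (n + 1) * (p * ∑ k, bregmanExponent (r k)) := by
        rw [← mul_add, ← sum_add_distrib, mul_sum, mul_sum, mul_sum]
        refine sum_congr rfl fun k _ => ?_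
        rw [← add_assoc, log_add_mul_bregmanExponent_sub_one (by linarith [hr k])]
        ring
    exact (exp_log hp).symm.trans_le (exp_le_exp.2 (le_of_mul_le_mul_left
      (le_of_mul_le_mul_left key (by positivity)) hp))

lemma concaveOn_Ici_of_hasDerivAt2_nonpos {f f' f'' : ℝ → ℝ} {a : ℝ}
    (hf : ∀ x, a ≤ x → HasDerivAt f (f' x) x) (hf' : ∀ x, a < x → HasDerivAt f' (f'' x) x)
    (hf'' : ∀ x, a < x → f'' x ≤ 0) : ConcaveOn ℝ (Set.Ici a) f := by
  refine concaveOn_of_hasDerivWithinAt2_nonpos (f' := f') (f'' := f'') (convex_Ici a)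
    (fun x hx => (hf x hx).continuousAt.continuousWithinAt) ?_ ?_ ?_ <;> rw [interior_Ici]
  · exact fun x hx => (hf x (le_of_lt hx)).hasDerivWithinAt
  · exact fun x hx => (hf' x hx).hasDerivWithinAt
  · exact hf''

lemma ConcaveOn.sum_le_card_mul {s : Set ℝ} {f : ℝ → ℝ} (hf : ConcaveOn ℝ s f) {ι : Type*}
    [Fintype ι] {x : ι → ℝ} (hx : ∀ i, x i ∈ s) {y : ℝ}
    (hy : ∑ i, x i = Fintype.card ι * y) : ∑ i, f (x i) ≤ Fintype.card ι * f y := by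
  rcases Nat.eq_zero_or_pos (Fintype.card ι) with h | h
  · simp [Fintype.card_eq_zero_iff.mp h]
  have hc : (0 : ℝ) < Fintype.card ι := by exact_mod_cast h
  have hJ := hf.le_map_sum (t := univ) (w := fun _ => (Fintype.card ι : ℝ)⁻¹)
    (fun _ _ => by positivity) (by simp [hc.ne']) (fun i _ => hx i)
  simp only [smul_eq_mul, ← mul_sum, hy, inv_mul_cancel_left₀ hc.ne'] at hJ
  rwa [inv_mul_le_iff₀ hc] at hJ

/-- An upper bound for `log (s !) / s`, coming from `s ! ≤ e √s (s / e) ^ s`. -/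
noncomputable def stirlingBound (s : ℝ) : ℝ := log s - 1 + (1 + log s / 2) / s

lemma factorial_le_exp_one_mul_sqrt_mul_pow (k : ℕ) (hk : k ≠ 0) :
    (k ! : ℝ) ≤ exp 1 * √k * (k / exp 1) ^ k := by
  have hseq : Stirling.stirlingSeq k ≤ Stirling.stirlingSeq 1 := by
    obtain ⟨m, rfl⟩ := Nat.exists_eq_succ_of_ne_zero hk
    exact Stirling.stirlingSeq'_antitone (Nat.zero_le m)
  have hpos : 0 < √(2 * k : ℝ) * (k / exp 1) ^ k := by positivity
  rw [Stirling.stirlingSeq, Stirling.stirlingSeq_one, div_le_iff₀ hpos] at hseq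
  calc (k ! : ℝ) ≤ exp 1 / √2 * (√(2 * k : ℝ) * (k / exp 1) ^ k) := hseq
    _ = exp 1 * √k * (k / exp 1) ^ k := by
      rw [Real.sqrt_mul (by norm_num)]
      field_simp

lemma log_factorial_le_mul_stirlingBound (k : ℕ) : log k ! ≤ k * stirlingBound k := by
  rcases eq_or_ne k 0 with rfl | hk
  · simp
  have hk' : (0 : ℝ) < k := by positivity
  calc log k ! ≤ log (exp 1 * √k * (k / exp 1) ^ k) :=
        log_le_log (by positivity) (factorial_le_exp_one_mul_sqrt_mul_pow k hk)
    _ = k * stirlingBound k := by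
      rw [log_mul (by positivity) (by positivity), log_mul (by positivity) (by positivity),
        log_pow, log_div hk'.ne' (exp_pos 1).ne', log_exp, log_sqrt hk'.le, stirlingBound]
      field_simp
      ring

lemma stirlingBound_le_log {s : ℝ} (hs : 1 ≤ s) : stirlingBound s ≤ log s := by
  have hlog := log_le_sub_one_of_pos (by linarith : 0 < s)
  have hfrac : (1 + log s / 2) / s ≤ 1 := by
    rw [div_le_one (by linarith)]
    linarith
  rw [stirlingBound]
  linarith

lemma one_add_log_sq_le {s : ℝ} (hs : 1 ≤ s) : (1 + log s) ^ 2 ≤ 2 * s := by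
  have hexp := quadratic_le_exp_of_nonneg (log_nonneg hs)
  rw [exp_log (by linarith)] at hexp
  nlinarith

lemma hasDerivAt_stirlingBound {s : ℝ} (hs : 0 < s) :
    HasDerivAt stirlingBound ((2 * s - 1 - log s) / (2 * s ^ 2)) s := by
  have hlog := hasDerivAt_log hs.ne'
  refine ((hlog.sub_const 1).add
    (((hlog.div_const 2).const_add 1).div (hasDerivAt_id' s) hs.ne')).congr_deriv ?_
  field_simp
  ring

lemma hasDerivAt_stirlingBound_deriv {s : ℝ} (hs : 0 < s) :
    HasDerivAt (fun s => (2 * s - 1 - log s) / (2 * s ^ 2)) ((log s + 1 / 2 - s) / s ^ 3) s := by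
  have h := (((hasDerivAt_id' s).const_mul 2).sub_const 1).sub (hasDerivAt_log hs.ne')
  refine (h.div ((hasDerivAt_pow 2 s).const_mul 2) (by positivity)).congr_deriv ?_
  simp only [Pi.sub_apply]
  field_simp
  ring

lemma concaveOn_stirlingBound : ConcaveOn ℝ (Set.Ici 1) stirlingBound :=
  concaveOn_Ici_of_hasDerivAt2_nonpos (fun s hs => hasDerivAt_stirlingBound (by linarith))
    (fun s hs => hasDerivAt_stirlingBound_deriv (by linarith)) fun s hs => by
      have hlog := log_le_sub_one_of_pos (by linarith : 0 < s)
      exact div_nonpos_of_nonpos_of_nonneg (by linarith) (by positivity)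

lemma concaveOn_exp_stirlingBound : ConcaveOn ℝ (Set.Ici 1) fun s => exp (stirlingBound s) := by
  refine concaveOn_Ici_of_hasDerivAt2_nonpos
    (fun s hs => (hasDerivAt_stirlingBound (by linarith)).exp)
    (fun s hs => ((hasDerivAt_stirlingBound (by linarith)).exp).mul
      (hasDerivAt_stirlingBound_deriv (by linarith))) fun s hs => ?_
  calc _ = exp (stirlingBound s) * (((1 + log s) ^ 2 - 2 * s) / (4 * s ^ 4)) := by
        field_simp
        ring
    _ ≤ 0 := mul_nonpos_of_nonneg_of_nonpos (exp_pos _).le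
        (div_nonpos_of_nonpos_of_nonneg (by linarith [one_add_log_sq_le hs.le]) (by positivity))

lemma exp_mul_stirlingBound (n : ℕ) {s : ℝ} (hs : 0 < s) :
    exp (n * stirlingBound s) = s ^ n * exp (-n) * (exp 1 * √s) ^ ((n : ℝ) / s) := by
  rw [rpow_def_of_pos (by positivity), log_mul (exp_pos 1).ne' (sqrt_pos.2 hs).ne', log_exp,
    log_sqrt hs.le, ← exp_log hs, ← exp_nat_mul, exp_log hs, ← exp_add, ← exp_add, stirlingBound]
  congr 1
  field_simp
  ring

section Bernoulli

variable {ι : Type*} [Fintype ι]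

noncomputable def bernoulliWeight (p : ι → ℝ) (v : ι → Bool) : ℝ :=
  ∏ j, if v j then p j else 1 - p j

lemma bernoulliWeight_nonneg {p : ι → ℝ} (h0 : ∀ j, 0 ≤ p j) (h1 : ∀ j, p j ≤ 1)
    (v : ι → Bool) : 0 ≤ bernoulliWeight p v :=
  prod_nonneg fun j _ => by split <;> linarith [h0 j, h1 j]

lemma sum_bernoulliWeight_mul_prod [DecidableEq ι] (p : ι → ℝ) (g : ι → Bool → ℝ) :
    ∑ v, bernoulliWeight p v * ∏ j, g j (v j) = ∏ j, (p j * g j true + (1 - p j) * g j false) :=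
  calc _ = ∏ j, ∑ b : Bool, (if b then p j else 1 - p j) * g j b := by
        simp only [bernoulliWeight, ← prod_mul_distrib]
        exact (Fintype.prod_sum fun j (b : Bool) => (if b then p j else 1 - p j) * g j b).symm
    _ = _ := by simp

lemma sum_bernoulliWeight [DecidableEq ι] (p : ι → ℝ) : ∑ v, bernoulliWeight p v = 1 := by
  simpa using sum_bernoulliWeight_mul_prod p fun _ _ => 1

lemma sum_bernoulliWeight_mul_indicator [DecidableEq ι] (p : ι → ℝ) (j : ι) :
    ∑ v, bernoulliWeight p v * (if v j then 1 else 0) = p j := by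
  simpa [apply_ite] using
    sum_bernoulliWeight_mul_prod p fun k b => if k = j then (if b then 1 else 0) else 1

lemma sum_bernoulliWeight_mul_card [DecidableEq ι] (p : ι → ℝ) :
    ∑ v, bernoulliWeight p v * (#{j | v j} : ℝ) = ∑ j, p j := by
  simp only [natCast_card_filter, mul_sum, ← sum_bernoulliWeight_mul_indicator p]
  exact sum_comm

end Bernoulli

theorem Matrix.permanent_eq_sum_bernoulliWeight {ι : Type*} [Fintype ι] [DecidableEq ι]
    (A : Matrix ι ι ℝ) :
    A.permanent = ∑ M : ι → ι → Bool,
      (∏ i, bernoulliWeight (A i) (M i)) *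
        (of fun i j => if M i j then (1 : ℝ) else 0).permanent := by
  simp only [permanent, mul_sum]
  rw [sum_comm]
  refine sum_congr rfl fun σ _ => ?_
  have hσ (f : ι → ι → ℝ) : ∏ m, f (σ m) m = ∏ i, f i (σ⁻¹ i) := by
    rw [← Equiv.prod_comp σ fun i => f i (σ⁻¹ i)]
    simp
  calc ∏ m, A (σ m) m
      = ∏ i, ∑ v, bernoulliWeight (A i) v * (if v (σ⁻¹ i) then 1 else 0) := by
        simp only [hσ A, sum_bernoulliWeight_mul_indicator]
    _ = ∑ M : ι → ι → Bool, ∏ i, bernoulliWeight (A i) (M i) * (if M i (σ⁻¹ i) then 1 else 0) :=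
        Fintype.prod_sum fun i v => bernoulliWeight (A i) v * (if v (σ⁻¹ i) then 1 else 0)
    _ = _ := sum_congr rfl fun M _ => by
        rw [prod_mul_distrib, ← hσ fun i j => if M i j then (1 : ℝ) else 0]
        rfl

lemma bregmanExponent_natCast_le (k : ℕ) : bregmanExponent k ≤ stirlingBound (k + 1) := by
  rcases eq_or_ne k 0 with rfl | hk
  · simp [bregmanExponent, stirlingBound]
  have hk' : (0 : ℝ) < k := by positivity
  have hstirling := log_factorial_le_mul_stirlingBound (k + 1)
  have hlog := stirlingBound_le_log (s := k + 1) (by linarith)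
  have hfact : log ((k + 1)! : ℝ) = log (k + 1) + log k ! := by
    rw [Nat.factorial_succ, Nat.cast_mul, log_mul (by positivity) (by positivity)]
    push_cast
    ring
  rw [bregmanExponent, Gamma_nat_eq_factorial, div_le_iff₀ hk']
  push_cast at hstirling
  nlinarith

theorem Matrix.permanent_boolMatrix_le {n : ℕ} (M : Fin n → Fin n → Bool) :
    (of fun i j => if M i j then (1 : ℝ) else 0).permanent ≤
      ∏ i, exp (stirlingBound (#{j | M i j} + 1)) := by
  refine (permanent_le_exp_sum_bregmanExponent _ fun i j => by
    by_cases h : M i j <;> simp [h]).trans ?_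
  rw [← exp_sum]
  exact exp_le_exp.2 (sum_le_sum fun i _ => by simpa using bregmanExponent_natCast_le #{j | M i j})

theorem Matrix.permanent_le_prod_exp_stirlingBound {n : ℕ} (A : Matrix (Fin n) (Fin n) ℝ)
    (h0 : ∀ i j, 0 ≤ A i j) (h1 : ∀ i j, A i j ≤ 1) :
    A.permanent ≤ ∏ i, exp (stirlingBound (∑ j, A i j + 1)) := by
  have hw (i : Fin n) (v : Fin n → Bool) := bernoulliWeight_nonneg (h0 i) (h1 i) v
  have hjensen (i : Fin n) : ∑ v, bernoulliWeight (A i) v * exp (stirlingBound (#{j | v j} + 1)) ≤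
      exp (stirlingBound (∑ j, A i j + 1)) := by
    have h := concaveOn_exp_stirlingBound.le_map_sum (t := univ) (w := bernoulliWeight (A i))
      (p := fun v => (#{j | v j} : ℝ) + 1) (fun v _ => hw i v) (sum_bernoulliWeight (A i))
      (fun v _ => by simp)
    simpa [mul_add, sum_add_distrib, sum_bernoulliWeight, sum_bernoulliWeight_mul_card] using h
  calc A.permanent = ∑ M : Fin n → Fin n → Bool, (∏ i, bernoulliWeight (A i) (M i)) *
        (of fun i j => if M i j then (1 : ℝ) else 0).permanent :=
      permanent_eq_sum_bernoulliWeight A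
    _ ≤ ∑ M : Fin n → Fin n → Bool,
        ∏ i, bernoulliWeight (A i) (M i) * exp (stirlingBound (#{j | M i j} + 1)) :=
      sum_le_sum fun M _ => by
        rw [prod_mul_distrib]
        exact mul_le_mul_of_nonneg_left (permanent_boolMatrix_le M) (prod_nonneg fun i _ => hw i _)
    _ = ∏ i, ∑ v, bernoulliWeight (A i) v * exp (stirlingBound (#{j | v j} + 1)) :=
      (Fintype.prod_sum fun i v =>
        bernoulliWeight (A i) v * exp (stirlingBound (#{j | v j} + 1))).symm
    _ ≤ _ := prod_le_prod (fun i _ => sum_nonneg fun v _ => mul_nonneg (hw i v) (exp_pos _).le)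
      fun i _ => hjensen i

theorem permanent_le_of_total_sum_general {n : ℕ} (A : Matrix (Fin n) (Fin n) ℝ) (γ : ℝ)
    (hA0 : ∀ i j, 0 ≤ A i j) (hA1 : ∀ i j, A i j ≤ 1)
    (hγ : 0 ≤ γ)
    (hsum : ∑ i, ∑ j, A i j = γ * n) :
    A.permanent ≤ (γ + 1) ^ n * Real.exp (-(n : ℝ)) *
      (Real.exp 1 * Real.sqrt (γ + 1)) ^ ((n : ℝ) / (γ + 1)) := by
  have hrow (i : Fin n) : ∑ j, A i j + 1 ∈ Set.Ici (1 : ℝ) := by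
    simpa using sum_nonneg fun j _ => hA0 i j
  have hjensen : ∑ i, stirlingBound (∑ j, A i j + 1) ≤ n * stirlingBound (γ + 1) := by
    simpa using concaveOn_stirlingBound.sum_le_card_mul hrow
      (by simp only [sum_add_distrib, hsum, sum_const, card_univ, Fintype.card_fin, nsmul_eq_mul,
        mul_one]; ring)
  calc A.permanent ≤ ∏ i, exp (stirlingBound (∑ j, A i j + 1)) :=
        permanent_le_prod_exp_stirlingBound A hA0 hA1
    _ = exp (∑ i, stirlingBound (∑ j, A i j + 1)) := (exp_sum _ _).symm
    _ ≤ exp (n * stirlingBound (γ + 1)) := exp_le_exp.2 hjensen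
    _ = _ := exp_mul_stirlingBound n (by linarith)

/-- if `A` is an `n × n` matrix with entries in `[0,1]` whose entries sum to
`γ * n` with `γ ≥ 0` and `⌈γ⌉ + 1 ≤ n`, then
`per A ≤ (γ+1)^n * e^(-n) * (e * √(γ+1))^(n/(γ+1))`. -/
theorem permanent_le_of_total_sum {n : ℕ} (A : Matrix (Fin n) (Fin n) ℝ) (γ : ℝ)
    (hA0 : ∀ i j, 0 ≤ A i j) (hA1 : ∀ i j, A i j ≤ 1)
    (hγ : 0 ≤ γ) (hγn : ⌈γ⌉₊ + 1 ≤ n)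
    (hsum : ∑ i, ∑ j, A i j = γ * n) :
    A.permanent ≤ (γ + 1) ^ n * Real.exp (-(n : ℝ)) *
      (Real.exp 1 * Real.sqrt (γ + 1)) ^ ((n : ℝ) / (γ + 1)) :=
  permanent_le_of_total_sum_general A γ hA0 hA1 hγ hsum
end

section
/- The function g(x) = e^{1/x} · x^{1 + 1/(2x)} · e^{-1} is concave on the interval (1, ∞). -/
/-!
Write `g = exp ∘ φ` with `φ x = 1/x + (1 + 1/(2x)) log x - 1`. Then `g'' = (φ'² + φ'') g`, and
`φ'² + φ'' = ((1 + log x)² - 2x) / (4x⁴)`, which is nonpositive for `x ≥ 1` because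
`2x = 2 exp (log x) ≥ 2 + 2 log x + (log x)² ≥ (1 + log x)²`.
-/

open Real Set

theorem concaveOn_exp_comp_of_sq_deriv_add_deriv2_nonpos {s : Set ℝ} (hs : Convex ℝ s)
    {φ φ' φ'' : ℝ → ℝ} (hφ : ∀ x ∈ s, HasDerivAt φ (φ' x) x)
    (hφ' : ∀ x ∈ s, HasDerivAt φ' (φ'' x) x) (hφ'' : ∀ x ∈ s, φ' x ^ 2 + φ'' x ≤ 0) :
    ConcaveOn ℝ s fun x => exp (φ x) := by
  refine concaveOn_of_hasDerivWithinAt2_nonpos hs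
    (f' := fun x => exp (φ x) * φ' x) (f'' := fun x => exp (φ x) * (φ' x ^ 2 + φ'' x))
    (fun x hx => (hφ x hx).exp.continuousAt.continuousWithinAt)
    (fun x hx => (hφ x (interior_subset hx)).exp.hasDerivWithinAt)
    (fun x hx => ?_)
    (fun x hx => mul_nonpos_of_nonneg_of_nonpos (exp_pos _).le (hφ'' x (interior_subset hx)))
  have hx := interior_subset hx
  exact (((hφ x hx).exp.mul (hφ' x hx)).congr_deriv (by ring)).hasDerivWithinAt

theorem one_add_sq_le_two_mul_exp {t : ℝ} (ht : 0 ≤ t) : (1 + t) ^ 2 ≤ 2 * exp t := by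
  nlinarith [quadratic_le_exp_of_nonneg ht]

theorem one_add_log_sq_le_two_mul {x : ℝ} (hx : 1 ≤ x) : (1 + log x) ^ 2 ≤ 2 * x := by
  simpa [exp_log (one_pos.trans_le hx)] using one_add_sq_le_two_mul_exp (log_nonneg hx)

noncomputable def logG (x : ℝ) : ℝ := 1 / x + (1 + 1 / (2 * x)) * log x - 1

noncomputable def logGDeriv (x : ℝ) : ℝ := 1 / x - (1 + log x) / (2 * x ^ 2)

noncomputable def logGDeriv2 (x : ℝ) : ℝ := -1 / x ^ 2 - 1 / (2 * x ^ 3) + (1 + log x) / x ^ 3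

theorem hasDerivAt_one_div {x : ℝ} (hx : x ≠ 0) :
    HasDerivAt (fun y : ℝ => 1 / y) (-(x ^ 2)⁻¹) x := by
  simpa only [one_div] using hasDerivAt_inv hx

theorem exp_logG {x : ℝ} (hx : 0 < x) :
    exp (logG x) = exp (1 / x) * x ^ (1 + 1 / (2 * x)) * exp (-1) := by
  rw [rpow_def_of_pos hx, ← exp_add, ← exp_add, logG]
  congr 1
  ring

theorem hasDerivAt_logG {x : ℝ} (hx : 0 < x) : HasDerivAt logG (logGDeriv x) x := by
  have hinv := hasDerivAt_one_div hx.ne'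
  have hcoef : HasDerivAt (fun y : ℝ => 1 + 1 / (2 * y)) (-(2 * 1) / (2 * x) ^ 2) x := by
    simpa only [one_div, Pi.inv_apply] using
      (((hasDerivAt_id' x).const_mul 2).inv (by positivity)).const_add 1
  refine ((hinv.add (hcoef.mul (hasDerivAt_log hx.ne'))).sub_const 1).congr_deriv ?_
  rw [logGDeriv]
  field_simp
  ring

theorem hasDerivAt_logGDeriv {x : ℝ} (hx : 0 < x) : HasDerivAt logGDeriv (logGDeriv2 x) x := by
  have hinv := hasDerivAt_one_div hx.ne'
  have hsq : HasDerivAt (fun y : ℝ => 2 * y ^ 2) (2 * (2 * x)) x := by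
    simpa using (hasDerivAt_pow 2 x).const_mul 2
  have hquot := ((hasDerivAt_log hx.ne').const_add 1).div hsq (by positivity)
  refine (hinv.sub hquot).congr_deriv ?_
  rw [logGDeriv2]
  field_simp
  ring

theorem logGDeriv_sq_add_logGDeriv2 {x : ℝ} (hx : 0 < x) :
    logGDeriv x ^ 2 + logGDeriv2 x = ((1 + log x) ^ 2 - 2 * x) / (4 * x ^ 4) := by
  rw [logGDeriv, logGDeriv2]
  field_simp
  ring

/-- the function `g(x) = e^(1/x) * x^(1 + 1/(2x)) * e^(-1)` is concave on the
interval `(1, ∞)`. -/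
theorem concaveOn_g :
    ConcaveOn ℝ (Set.Ioi (1 : ℝ))
      (fun x : ℝ => Real.exp (1 / x) * x ^ (1 + 1 / (2 * x)) * Real.exp (-1)) := by
  have hpos {x : ℝ} (hx : x ∈ Ioi (1 : ℝ)) : 0 < x := one_pos.trans hx
  refine (concaveOn_exp_comp_of_sq_deriv_add_deriv2_nonpos (convex_Ioi 1)
    (fun x hx => hasDerivAt_logG (hpos hx)) (fun x hx => hasDerivAt_logGDeriv (hpos hx))
    (fun x hx => ?_)).congr fun x hx => exp_logG (hpos hx)
  rw [logGDeriv_sq_add_logGDeriv2 (hpos hx)]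
  exact div_nonpos_of_nonpos_of_nonneg
    (sub_nonpos.2 (one_add_log_sq_le_two_mul (le_of_lt hx))) (by positivity)
end

section
/- Let A be an n×n matrix with real entries in the interval [0,1], and suppose that for each i the sum of the entries in the i-th row of A is at most r_i, where r_i > 0 and ⌈r_i⌉ ≤ n. Then there exists an n×n (0,1)-matrix A' such that the i-th row of A' contains exactly ⌈r_i⌉ ones for each i, and per A ≤ per A'. -/
/-!
The permanent is affine in each row: expanding along row `a` gives
`per A = ∑ j, A a j * c j`, where `c j ≥ 0` is the permanent of `A` with row `a` replaced by the
`j`-th unit vector. Over the vectors `x ∈ [0,1]ⁿ` with `∑ x ≤ k`, such a linear form is at most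
the sum of the `k` largest coefficients `c j`, which is its value at the indicator of the
corresponding `k` columns. Replacing the rows one at a time by such indicators never decreases
the permanent.
-/

open Finset Matrix Equiv

namespace Matrix

theorem updateRow_nonneg {m n R : Type*} [DecidableEq m] [Zero R] [Preorder R] {M : Matrix m n R}
    (hM : ∀ i j, 0 ≤ M i j) {v : n → R} (hv : 0 ≤ v) (a : m) :
    ∀ i j, 0 ≤ M.updateRow a v i j := by
  intro i j
  rw [updateRow_apply]
  split_ifs
  exacts [hv j, hM i j]

variable {n : Type*} [DecidableEq n] [Fintype n] {R : Type*} [CommSemiring R]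

theorem permanent_updateCol_eq_sum (M : Matrix n n R) (j : n) (u : n → R) :
    (M.updateCol j u).permanent = ∑ σ : Perm n, u (σ j) * ∏ i ∈ univ.erase j, M (σ i) i := by
  simp only [permanent, ← mul_prod_erase _ _ (mem_univ j), updateCol_self]
  refine sum_congr rfl fun σ _ => congrArg _ (prod_congr rfl fun i hi => ?_)
  simp [ne_of_mem_erase hi]

theorem permanent_updateCol_eq_sum_mul (M : Matrix n n R) (j : n) (u : n → R) :
    (M.updateCol j u).permanent = ∑ k, u k * (M.updateCol j (Pi.single k 1)).permanent := by
  simp only [permanent_updateCol_eq_sum, mul_sum, Pi.single_apply, mul_ite, ite_mul,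
    mul_zero, zero_mul]
  rw [sum_comm]
  simp

theorem permanent_updateRow_eq_sum_mul (M : Matrix n n R) (i : n) (v : n → R) :
    (M.updateRow i v).permanent = ∑ k, v k * (M.updateRow i (Pi.single k 1)).permanent := by
  rw [← permanent_transpose, ← updateCol_transpose, permanent_updateCol_eq_sum_mul]
  simp only [updateCol_transpose, permanent_transpose]

theorem permanent_nonneg_s12 [PartialOrder R] [IsOrderedRing R] {M : Matrix n n R}
    (hM : ∀ i j, 0 ≤ M i j) : 0 ≤ M.permanent :=
  sum_nonneg fun _ _ => prod_nonneg fun _ _ => hM _ _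

end Matrix

section Permanent

variable {ι : Type*} [Fintype ι] [DecidableEq ι]

theorem sum_mul_le_sum_of_threshold {a c : ι → ℝ} {S : Finset ι} {t : ℝ} (ht : 0 ≤ t)
    (hout : ∀ j ∉ S, c j ≤ t) (hin : ∀ j ∈ S, t ≤ c j)
    (ha0 : ∀ j, 0 ≤ a j) (ha1 : ∀ j, a j ≤ 1) (hsum : ∑ j, a j ≤ #S) :
    ∑ j, a j * c j ≤ ∑ j ∈ S, c j := by
  have hrest : ∑ j ∈ Sᶜ, a j ≤ ∑ j ∈ S, (1 - a j) := by
    rw [sum_sub_distrib, sum_const, nsmul_one]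
    linarith [sum_add_sum_compl S a]
  have hcompl : ∑ j ∈ Sᶜ, a j * c j ≤ ∑ j ∈ S, (1 - a j) * c j :=
    calc ∑ j ∈ Sᶜ, a j * c j
        ≤ ∑ j ∈ Sᶜ, a j * t :=
          sum_le_sum fun j hj => mul_le_mul_of_nonneg_left (hout j (mem_compl.1 hj)) (ha0 j)
      _ = (∑ j ∈ Sᶜ, a j) * t := (sum_mul ..).symm
      _ ≤ (∑ j ∈ S, (1 - a j)) * t := mul_le_mul_of_nonneg_right hrest ht
      _ = ∑ j ∈ S, (1 - a j) * t := sum_mul ..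
      _ ≤ ∑ j ∈ S, (1 - a j) * c j :=
          sum_le_sum fun j hj => mul_le_mul_of_nonneg_left (hin j hj) (sub_nonneg.2 (ha1 j))
  calc ∑ j, a j * c j
      = ∑ j ∈ S, a j * c j + ∑ j ∈ Sᶜ, a j * c j := (sum_add_sum_compl S _).symm
    _ ≤ ∑ j ∈ S, a j * c j + ∑ j ∈ S, (1 - a j) * c j := by gcongr
    _ = ∑ j ∈ S, c j := by
      rw [← sum_add_distrib]
      exact sum_congr rfl fun j _ => by ring

theorem exists_card_eq_forall_notMem_le {k : ℕ} (hk : k ≤ Fintype.card ι) (c : ι → ℝ) :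
    ∃ S : Finset ι, #S = k ∧ ∀ i ∈ S, ∀ j ∉ S, c j ≤ c i := by
  obtain ⟨S, hS, hmax⟩ := exists_max_image (powersetCard k univ) (fun S => ∑ j ∈ S, c j)
    (powersetCard_nonempty.2 (by simpa using hk))
  have hScard := (mem_powersetCard.1 hS).2
  refine ⟨S, hScard, fun i hi j hj => not_lt.1 fun hlt => ?_⟩
  have hj' : j ∉ S.erase i := fun h => hj (mem_of_mem_erase h)
  have hswap : insert j (S.erase i) ∈ powersetCard k univ :=
    mem_powersetCard.2 ⟨subset_univ _, by rw [card_insert_of_notMem hj', card_erase_add_one hi,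
      hScard]⟩
  have := hmax _ hswap
  rw [sum_insert hj', sum_erase_eq_sub hi] at this
  linarith

theorem exists_card_eq_sum_mul_le_sum {k : ℕ} (hk : k ≤ Fintype.card ι) {a c : ι → ℝ}
    (hc : ∀ j, 0 ≤ c j) (ha0 : ∀ j, 0 ≤ a j) (ha1 : ∀ j, a j ≤ 1) (hsum : ∑ j, a j ≤ k) :
    ∃ S : Finset ι, #S = k ∧ ∑ j, a j * c j ≤ ∑ j ∈ S, c j := by
  obtain ⟨S, hScard, hSc⟩ := exists_card_eq_forall_notMem_le hk c
  refine ⟨S, hScard, ?_⟩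
  obtain rfl | ⟨i₀, hi₀⟩ := S.eq_empty_or_nonempty
  · have ha : ∀ j, a j = 0 := fun j => le_antisymm
      ((single_le_sum (fun j _ => ha0 j) (mem_univ j)).trans (by simpa [← hScard] using hsum))
      (ha0 j)
    simp [ha]
  · obtain ⟨i, hi, hmin⟩ := exists_min_image S c ⟨i₀, hi₀⟩
    exact sum_mul_le_sum_of_threshold (hc i) (hSc i hi) hmin ha0 ha1 (hScard ▸ hsum)

theorem exists_card_eq_permanent_le_updateRow_indicator {k : ℕ} (hk : k ≤ Fintype.card ι)
    (M : Matrix ι ι ℝ) (a : ι) (hM : ∀ i j, 0 ≤ M i j) (h1 : ∀ j, M a j ≤ 1)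
    (hsum : ∑ j, M a j ≤ k) :
    ∃ S : Finset ι, #S = k ∧
      M.permanent ≤ (M.updateRow a ((S : Set ι).indicator 1)).permanent := by
  set c : ι → ℝ := fun j => (M.updateRow a (Pi.single j 1)).permanent
  have hc : ∀ j, 0 ≤ c j := fun j =>
    permanent_nonneg_s12 (updateRow_nonneg hM (Pi.single_nonneg.2 zero_le_one) a)
  obtain ⟨S, hS, hle⟩ := exists_card_eq_sum_mul_le_sum hk hc (hM a) h1 hsum
  refine ⟨S, hS, ?_⟩
  calc M.permanent = ∑ j, M a j * c j := by
        conv_lhs => rw [← updateRow_eq_self M a]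
        exact permanent_updateRow_eq_sum_mul M a (M a)
    _ ≤ ∑ j ∈ S, c j := hle
    _ = _ := by
        rw [permanent_updateRow_eq_sum_mul]
        simp [Set.indicator_apply, ite_mul, c]

theorem exists_rows_indicator_on_permanent_le (k : ι → ℕ) (hk : ∀ i, k i ≤ Fintype.card ι)
    (T : Finset ι) (A : Matrix ι ι ℝ) (h0 : ∀ i j, 0 ≤ A i j) (h1 : ∀ i ∈ T, ∀ j, A i j ≤ 1)
    (hsum : ∀ i ∈ T, ∑ j, A i j ≤ k i) :
    ∃ B : Matrix ι ι ℝ, (∀ i ∉ T, B i = A i) ∧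
      (∀ i ∈ T, ∃ S : Finset ι, #S = k i ∧ B i = (S : Set ι).indicator 1) ∧
      A.permanent ≤ B.permanent := by
  induction T using Finset.induction_on generalizing A with
  | empty => exact ⟨A, fun _ _ => rfl, by simp, le_rfl⟩
  | @insert a T haT ih =>
    obtain ⟨S, hS, hper⟩ := exists_card_eq_permanent_le_updateRow_indicator (hk a) A a h0
      (h1 a (mem_insert_self a T)) (hsum a (mem_insert_self a T))
    have hrowT : ∀ i ∈ T, A.updateRow a ((S : Set ι).indicator 1) i = A i := fun i hi =>
      updateRow_ne (ne_of_mem_of_not_mem hi haT)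
    obtain ⟨B, hBout, hBin, hB⟩ := ih (A.updateRow a ((S : Set ι).indicator 1))
      (updateRow_nonneg h0 (Set.indicator_nonneg fun _ _ => zero_le_one) a)
      (fun i hi => hrowT i hi ▸ h1 i (mem_insert_of_mem hi))
      (fun i hi => hrowT i hi ▸ hsum i (mem_insert_of_mem hi))
    refine ⟨B, fun i hi => ?_, fun i hi => ?_, hper.trans hB⟩
    · rw [mem_insert, not_or] at hi
      rw [hBout i hi.2, updateRow_ne hi.1]
    · rcases mem_insert.1 hi with rfl | hi
      · exact ⟨S, hS, by rw [hBout i haT, updateRow_self]⟩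
      · exact hBin i hi

end Permanent

theorem exists_zero_one_matrix_ge_permanent_general {n : ℕ} (A : Matrix (Fin n) (Fin n) ℝ)
    (r : Fin n → ℝ)
    (hA0 : ∀ i j, 0 ≤ A i j) (hA1 : ∀ i j, A i j ≤ 1)
    (hrn : ∀ i, ⌈r i⌉₊ ≤ n)
    (hrow : ∀ i, ∑ j, A i j ≤ r i) :
    ∃ A' : Matrix (Fin n) (Fin n) ℝ,
      (∀ i j, A' i j = 0 ∨ A' i j = 1) ∧
      (∀ i, (Finset.univ.filter fun j => A' i j = 1).card = ⌈r i⌉₊) ∧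
      A.permanent ≤ A'.permanent := by
  obtain ⟨B, -, hB, hper⟩ := exists_rows_indicator_on_permanent_le (fun i => ⌈r i⌉₊)
    (by simpa using hrn) univ A hA0 (fun i _ => hA1 i)
    (fun i _ => (hrow i).trans (Nat.le_ceil _))
  choose S hS hBS using fun i => hB i (mem_univ i)
  refine ⟨B, fun i j => ?_, fun i => ?_, hper⟩
  · rw [hBS i]
    exact Set.indicator_eq_zero_or_self _ _ _
  · rw [← hS i, hBS i]
    congr 1
    ext j
    simp [Set.indicator_apply]

/-- if `A` is an `n × n` matrix with entries in `[0,1]` whose `i`-th row sum is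
at most `r i` (with `r i > 0` and `⌈r i⌉ ≤ n`), then there is an `n × n` (0,1)-matrix `A'`
whose `i`-th row contains exactly `⌈r i⌉` ones and with `per A ≤ per A'`. -/
theorem exists_zero_one_matrix_ge_permanent {n : ℕ} (A : Matrix (Fin n) (Fin n) ℝ)
    (r : Fin n → ℝ)
    (hA0 : ∀ i j, 0 ≤ A i j) (hA1 : ∀ i j, A i j ≤ 1)
    (hr : ∀ i, 0 < r i) (hrn : ∀ i, ⌈r i⌉₊ ≤ n)
    (hrow : ∀ i, ∑ j, A i j ≤ r i) :
    ∃ A' : Matrix (Fin n) (Fin n) ℝ,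
      (∀ i j, A' i j = 0 ∨ A' i j = 1) ∧
      (∀ i, (Finset.univ.filter fun j => A' i j = 1).card = ⌈r i⌉₊) ∧
      A.permanent ≤ A'.permanent :=
  exists_zero_one_matrix_ge_permanent_general A r hA0 hA1 hrn hrow
end
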